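/- In the setting of lying women with no liar worse-off: if w is a rejecter, then N(B(w)) is also a rejecter, and during the original run w rejected N(w) on a strictly later night than the night on which N(B(w)) rejected B(w). -/

import Mathlib

namespace GS

/-- The `k` most-preferred elements of `S` according to the rank function `rank`
(lower rank = more preferred); if `S` has at most `k` elements this is all of `S`. -/
def topk {α : Type*} [DecidableEq α] (rank : α → ℕ) (k : ℕ) (S : Finset α) : Finset α :=
  S.filter fun a => (S.filter fun b => rank b < rank a).card < k

/-- An instance of the stable-matching problem with `n` women and `n` men.
`mpref m w` is the rank man `m` assigns to woman `w` (lower = more preferred),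
and `wpref w m` is the rank woman `w` assigns to man `m`. -/
structure Instance (n : ℕ) where
  mpref : Fin n → Fin n → ℕ
  wpref : Fin n → Fin n → ℕ
  mprefInj : ∀ m, Function.Injective (mpref m)
  wprefInj : ∀ w, Function.Injective (wpref w)

variable {n : ℕ}

/-- `prefers p a b` : `a` is strictly preferred to `b` under rank function `p`. -/
def prefers (p : Fin n → ℕ) (a b : Fin n) : Prop := p a < p b

/-- Given the current state `avail m` (the women who have not yet rejected man `m`),
the set of women man `m` proposes to tonight: his most-preferred available woman
(a singleton, or empty if no woman is available). -/
def proposals (I : Instance n) (avail : Fin n → Finset (Fin n)) (m : Fin n) :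
    Finset (Fin n) := topk (I.mpref m) 1 (avail m)

/-- The men proposing to woman `w` tonight. -/
def proposersOf (I : Instance n) (avail : Fin n → Finset (Fin n)) (w : Fin n) :
    Finset (Fin n) := Finset.univ.filter fun m => w ∈ proposals I avail m

/-- The men rejected by woman `w` tonight: all of tonight's proposers except
her most-preferred one. -/
def rejectedBy (I : Instance n) (avail : Fin n → Finset (Fin n)) (w : Fin n) :
    Finset (Fin n) := proposersOf I avail w \ topk (I.wpref w) 1 (proposersOf I avail w)

/-- One night of the men-proposing Gale-Shapley algorithm. -/
def step (I : Instance n) (avail : Fin n → Finset (Fin n)) :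
    Fin n → Finset (Fin n) :=
  fun m => (avail m).filter fun w => m ∉ rejectedBy I avail w

/-- `nights I t m` : the set of women who have not rejected man `m` before night `t`
(initially all women). -/
def nights (I : Instance n) (t : ℕ) : Fin n → Finset (Fin n) :=
  (step I)^[t] (fun _ => Finset.univ)

/-- The algorithm has terminated by night `T`: no man is rejected on night `T`. -/
def Stopped (I : Instance n) (T : ℕ) : Prop := step I (nights I T) = nights I T

/-- On night `T`, each man `m` serenades exactly under the window of `μ m`. -/
def MatchesAt (I : Instance n) (T : ℕ) (μ : Fin n ≃ Fin n) : Prop :=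
  ∀ m, proposals I (nights I T) m = {μ m}

/-- The bijection `μ` (from men to women) is the outcome of the men-proposing
Gale-Shapley algorithm on instance `I`: for some night `T` no rejection occurs and
every man `m` is matched with `μ m`. -/
def IsGSMatching (I : Instance n) (μ : Fin n ≃ Fin n) : Prop :=
  ∃ T, Stopped I T ∧ MatchesAt I T μ

/-- Stability of a matching `μ` (men to women): there is no unmatched pair `(w, m)`
each of whom strictly prefers the other to their partner under `μ`. -/
def Stable (I : Instance n) (μ : Fin n ≃ Fin n) : Prop :=
  ¬ ∃ m w, μ m ≠ w ∧ I.mpref m w < I.mpref m (μ m) ∧ I.wpref w m < I.wpref w (μ.symm w)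

/-- The instance in which the women in `L` replace their true preferences by the
false preference rankings `f`, everyone else being truthful. -/
def liarInstance (I : Instance n) (L : Finset (Fin n))
    (f : Fin n → Fin n → ℕ) (hf : ∀ w, Function.Injective (f w)) : Instance n where
  mpref := I.mpref
  wpref := fun w => if w ∈ L then f w else I.wpref w
  mprefInj := I.mprefInj
  wprefInj := fun w => by split_ifs; exacts [hf w, I.wprefInj w]

end GS

/-!
On the night `w` rejects `N(w)` she keeps `b`, so in her true preferences
`O(w) ≥ b > N(w)`. Since no liar is worse off, `w` is truthful, and stability of `N`
for the reported preferences makes `b` prefer `N(b)` to `w`. Having proposed to `w`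
on that night, `b` must already have been rejected by `N(b)`.
-/

namespace GS

variable {n : ℕ}

theorem mem_topk_one {α : Type*} [DecidableEq α] {rank : α → ℕ} {S : Finset α} {a : α} :
    a ∈ topk rank 1 S ↔ a ∈ S ∧ ∀ b ∈ S, rank a ≤ rank b := by
  simp [topk, Finset.card_eq_zero, Finset.filter_eq_empty_iff]

theorem topk_one_nonempty {α : Type*} [DecidableEq α] {rank : α → ℕ} {S : Finset α}
    (hS : S.Nonempty) : (topk rank 1 S).Nonempty := by
  obtain ⟨a, ha, hmin⟩ := S.exists_min_image rank hS
  exact ⟨a, mem_topk_one.2 ⟨ha, hmin⟩⟩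

section Night

variable {I : Instance n} {avail : Fin n → Finset (Fin n)} {w m b : Fin n}

theorem mem_proposersOf : m ∈ proposersOf I avail w ↔ w ∈ proposals I avail m := by
  simp [proposersOf]

theorem mem_proposersOf_of_mem_rejectedBy (h : m ∈ rejectedBy I avail w) :
    m ∈ proposersOf I avail w :=
  (Finset.mem_sdiff.1 h).1

theorem exists_not_mem_rejectedBy (hm : m ∈ proposersOf I avail w) :
    ∃ b ∈ proposersOf I avail w, b ∉ rejectedBy I avail w := by
  obtain ⟨b, hb⟩ := topk_one_nonempty (rank := I.wpref w) ⟨m, hm⟩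
  exact ⟨b, (mem_topk_one.1 hb).1, fun h => (Finset.mem_sdiff.1 h).2 hb⟩

theorem wpref_le_of_not_mem_rejectedBy (hb : b ∈ proposersOf I avail w)
    (hbk : b ∉ rejectedBy I avail w) (hm : m ∈ proposersOf I avail w) :
    I.wpref w b ≤ I.wpref w m := by
  have hbtop : b ∈ topk (I.wpref w) 1 (proposersOf I avail w) :=
    by_contra fun h => hbk (Finset.mem_sdiff.2 ⟨hb, h⟩)
  exact (mem_topk_one.1 hbtop).2 m hm

theorem wpref_lt_of_mem_rejectedBy (hb : b ∈ proposersOf I avail w)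
    (hbk : b ∉ rejectedBy I avail w) (hm : m ∈ rejectedBy I avail w) :
    I.wpref w b < I.wpref w m :=
  lt_of_le_of_ne (wpref_le_of_not_mem_rejectedBy hb hbk (mem_proposersOf_of_mem_rejectedBy hm))
    fun h => hbk (I.wprefInj w h ▸ hm)

end Night

section Run

variable {I : Instance n} {w m b x : Fin n} {t T : ℕ}

theorem nights_succ (I : Instance n) (t : ℕ) : nights I (t + 1) = step I (nights I t) :=
  Function.iterate_succ_apply' _ _ _

theorem mem_nights_succ :
    x ∈ nights I (t + 1) m ↔ x ∈ nights I t m ∧ m ∉ rejectedBy I (nights I t) x := by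
  rw [nights_succ]
  exact Finset.mem_filter

theorem mem_proposals_succ (hw : w ∈ proposals I (nights I t) m)
    (hm : m ∉ rejectedBy I (nights I t) w) : w ∈ proposals I (nights I (t + 1)) m := by
  rw [proposals, mem_topk_one] at hw ⊢
  exact ⟨mem_nights_succ.2 ⟨hw.1, hm⟩, fun x hx => hw.2 x (mem_nights_succ.1 hx).1⟩

theorem exists_not_mem_rejectedBy_wpref_le (hb : b ∈ proposersOf I (nights I t) w)
    (hbk : b ∉ rejectedBy I (nights I t) w) {t' : ℕ} (htt' : t ≤ t') :
    ∃ c ∈ proposersOf I (nights I t') w,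
      c ∉ rejectedBy I (nights I t') w ∧ I.wpref w c ≤ I.wpref w b := by
  induction t', htt' using Nat.le_induction with
  | base => exact ⟨b, hb, hbk, le_rfl⟩
  | succ t' _ ih =>
    obtain ⟨c, hc, hck, hcb⟩ := ih
    have hc' : c ∈ proposersOf I (nights I (t' + 1)) w :=
      mem_proposersOf.2 (mem_proposals_succ (mem_proposersOf.1 hc) hck)
    obtain ⟨d, hd, hdk⟩ := exists_not_mem_rejectedBy hc'
    exact ⟨d, hd, hdk, (wpref_le_of_not_mem_rejectedBy hd hdk hc').trans hcb⟩

theorem exists_lt_mem_rejectedBy_of_not_mem_nights :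
    ∀ {t : ℕ}, x ∉ nights I t m → ∃ s < t, m ∈ rejectedBy I (nights I s) x
  | 0, h => absurd (Finset.mem_univ x) h
  | t + 1, h => by
    by_cases hx : x ∈ nights I t m
    · exact ⟨t, t.lt_succ_self, by_contra fun hm => h (mem_nights_succ.2 ⟨hx, hm⟩)⟩
    · obtain ⟨s, hs, hrej⟩ := exists_lt_mem_rejectedBy_of_not_mem_nights hx
      exact ⟨s, hs.trans t.lt_succ_self, hrej⟩

theorem exists_lt_mem_rejectedBy_of_mem_proposals (hw : w ∈ proposals I (nights I t) m)
    (hx : I.mpref m x < I.mpref m w) : ∃ s < t, m ∈ rejectedBy I (nights I s) x :=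
  exists_lt_mem_rejectedBy_of_not_mem_nights fun hxt =>
    (mem_topk_one.1 hw).2 x hxt |>.not_gt hx

variable {μ : Fin n ≃ Fin n}

theorem MatchesAt.eq_symm_of_mem_proposersOf (hμ : MatchesAt I T μ)
    (hm : m ∈ proposersOf I (nights I T) w) : m = μ.symm w := by
  have hw := mem_proposersOf.1 hm
  rw [hμ m, Finset.mem_singleton] at hw
  rw [hw, Equiv.symm_apply_apply]

theorem MatchesAt.wpref_symm_le (hμ : MatchesAt I T μ) (hb : b ∈ proposersOf I (nights I t) w)
    (hbk : b ∉ rejectedBy I (nights I t) w) (htT : t ≤ T) :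
    I.wpref w (μ.symm w) ≤ I.wpref w b := by
  obtain ⟨c, hc, -, hcb⟩ := exists_not_mem_rejectedBy_wpref_le hb hbk htT
  rwa [← hμ.eq_symm_of_mem_proposersOf hc]

theorem MatchesAt.stable (hμ : MatchesAt I T μ) : Stable I μ := by
  rintro ⟨m, w, -, hmw, hwm⟩
  have hμm : μ m ∈ proposals I (nights I T) m := by
    rw [hμ m]
    exact Finset.mem_singleton_self _
  obtain ⟨s, hsT, hrej⟩ := exists_lt_mem_rejectedBy_of_mem_proposals hμm hmw
  obtain ⟨c, hc, hck⟩ := exists_not_mem_rejectedBy (mem_proposersOf_of_mem_rejectedBy hrej)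
  have hμc := hμ.wpref_symm_le hc hck hsT.le
  have hcm := wpref_lt_of_mem_rejectedBy hc hck hrej
  omega

theorem IsGSMatching.stable (h : IsGSMatching I μ) : Stable I μ :=
  let ⟨_, _, hμ⟩ := h
  hμ.stable

theorem Stable.mpref_lt (h : Stable I μ) (hne : μ m ≠ w)
    (hw : I.wpref w m < I.wpref w (μ.symm w)) : I.mpref m (μ m) < I.mpref m w :=
  lt_of_le_of_ne (not_lt.1 fun hlt => h ⟨m, w, hne, hlt, hw⟩) fun h => hne (I.mprefInj m h)

end Run

theorem liarInstance_wpref_of_not_mem {I : Instance n} {L : Finset (Fin n)}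
    {f : Fin n → Fin n → ℕ} {hf : ∀ w, Function.Injective (f w)} {w : Fin n} (hw : w ∉ L) :
    (liarInstance I L f hf).wpref w = I.wpref w :=
  if_neg hw

end GS

open GS in
theorem order_lemma_general (n : ℕ) (I : GS.Instance n)
    (L : Finset (Fin n)) (f : Fin n → Fin n → ℕ) (hf : ∀ w, Function.Injective (f w))
    (T : ℕ) (O : Fin n ≃ Fin n) (hO : MatchesAt I T O)
    (N : Fin n ≃ Fin n) (hN : IsGSMatching (liarInstance I L f hf) N)
    (hliars : ∀ w ∈ L, ¬ prefers (I.wpref w) (O.symm w) (N.symm w))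
    (w b : Fin n) (t : ℕ) (ht : t ≤ T)
    (hrej : N.symm w ∈ rejectedBy I (nights I t) w)
    (hb : b ∈ proposersOf I (nights I t) w)
    (hbkept : b ∉ rejectedBy I (nights I t) w) :
    ∃ s < t, b ∈ rejectedBy I (nights I s) (N b) := by
  have hbN : I.wpref w b < I.wpref w (N.symm w) := wpref_lt_of_mem_rejectedBy hb hbkept hrej
  have hOb : I.wpref w (O.symm w) ≤ I.wpref w b := hO.wpref_symm_le hb hbkept ht
  have hwL : w ∉ L := fun hwL => hliars w hwL (hOb.trans_lt hbN)
  have hNb : N b ≠ w := fun h => hbkept (N.symm_apply_eq.2 h.symm ▸ hrej)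
  have hbw : I.mpref b (N b) < I.mpref b w :=
    hN.stable.mpref_lt hNb (by rwa [liarInstance_wpref_of_not_mem hwL])
  exact exists_lt_mem_rejectedBy_of_mem_proposals (mem_proposersOf.1 hb) hbw

open GS in
/-- In the setting of lying women with no liar worse-off: if woman `w` rejected her
new partner `N(w)` on night `t` of the original run and `b = B(w)` is a man who
proposed to `w` that night without being rejected, then the woman `N(b)` is also a
rejecter, having rejected her own new partner `b` on a strictly earlier night. -/
theorem order_lemma (n : ℕ) (I : GS.Instance n)
    (L : Finset (Fin n)) (f : Fin n → Fin n → ℕ) (hf : ∀ w, Function.Injective (f w))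
    (T : ℕ) (hT : Stopped I T) (O : Fin n ≃ Fin n) (hO : MatchesAt I T O)
    (N : Fin n ≃ Fin n) (hN : IsGSMatching (liarInstance I L f hf) N)
    (hliars : ∀ w ∈ L, ¬ prefers (I.wpref w) (O.symm w) (N.symm w))
    (w b : Fin n) (t : ℕ) (ht : t ≤ T)
    (hrej : N.symm w ∈ rejectedBy I (nights I t) w)
    (hb : b ∈ proposersOf I (nights I t) w)
    (hbkept : b ∉ rejectedBy I (nights I t) w) :
    ∃ s < t, b ∈ rejectedBy I (nights I s) (N b) :=
  order_lemma_general n I L f hf T O hO N hN hliars w b t ht hrej hb hbkept
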